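/- arXiv:2311.03195 — 4 statements merged into one kernel-verified Lean document; each statement's English description precedes it below -/
import Mathlib

section
/- Let 1/2 < γ ≤ 1 and n ≥ 2, with all n players on the complete graph playing the symmetric coordination game with payoffs γ on (a,a), 1−γ on (b,b), and 0 otherwise. If a strategy profile is not the all-a profile, its welfare is at least min{2γ(n−1), n(n−1)(2γ−1)} less than the maximum welfare. -/
/-!
Since the payoff vanishes off the diagonal, only pairs of players using the same strategy
contribute, so the welfare of a profile in which `k` players play `a` and `m` play `b` is
`k(k-1)γ + m(m-1)(1-γ)`. For `k + m = n` fixed this is convex in `k`, so on the range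
`0 ≤ k ≤ n - 1` of profiles other than all-`a` it is largest at an endpoint: `k = 0` (all-`b`)
loses `n(n-1)(2γ-1)`, and `k = n - 1` loses `2γ(n-1)`.
-/

open Finset

section Fiberwise

variable {ι κ R : Type*} [Fintype ι] [Fintype κ] [DecidableEq κ]

theorem sum_sum_erase_eq_sub [DecidableEq ι] [AddCommGroup R] (f : ι → ι → R) :
    ∑ i, ∑ j ∈ univ.erase i, f i j = ∑ i, ∑ j, f i j - ∑ i, f i i := by
  simp_rw [sum_erase_eq_sub (mem_univ _), sum_sub_distrib]

theorem sum_comp_eq_sum_card_fiber_mul [Semiring R] (s : ι → κ) (f : κ → R) :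
    ∑ i, f (s i) = ∑ x, (#{i | s i = x} : R) * f x := by
  simp_rw [← sum_fiberwise' univ s f, sum_const, nsmul_eq_mul]

theorem sum_sum_erase_eq_sum_card_fiber_of_offDiag_eq_zero [DecidableEq ι] [CommRing R]
    (s : ι → κ) (u : κ → κ → R) (hu : ∀ x y, x ≠ y → u x y = 0) :
    ∑ i, ∑ j ∈ univ.erase i, u (s i) (s j) =
      ∑ x, (#{i | s i = x} : R) * (#{i | s i = x} - 1) * u x x := by
  have row : ∀ i, ∑ j, u (s i) (s j) = (#{j | s j = s i} : R) * u (s i) (s i) := fun i => by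
    rw [sum_comp_eq_sum_card_fiber_mul s (u (s i)),
      Fintype.sum_eq_single (s i) fun x hx => by rw [hu _ _ (Ne.symm hx), mul_zero]]
  rw [sum_sum_erase_eq_sub, Fintype.sum_congr _ _ row,
    sum_comp_eq_sum_card_fiber_mul s fun x => (#{j | s j = x} : R) * u x x,
    sum_comp_eq_sum_card_fiber_mul s fun x => u x x, ← sum_sub_distrib]
  exact Fintype.sum_congr _ _ fun x => by ring

end Fiberwise

theorem min_le_coordination_welfare_loss (k m γ : ℝ) (hk : 0 ≤ k) (hm : 1 ≤ m) :
    min (2 * γ * (k + m - 1)) ((k + m) * (k + m - 1) * (2 * γ - 1)) ≤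
      (k + m) * (k + m - 1) * γ - (k * (k - 1) * γ + m * (m - 1) * (1 - γ)) := by
  -- The loss minus each endpoint value (`m = 1`, resp. `k = 0`) factors; the sign of `k + c`
  -- decides which of the two products is nonnegative.
  set c := (k + m) * (2 * γ - 1) - 2 * γ
  have loss_sub_left : (k + m) * (k + m - 1) * γ - (k * (k - 1) * γ + m * (m - 1) * (1 - γ))
      - 2 * γ * (k + m - 1) = (m - 1) * (k + c) := by ring
  have loss_sub_right : (k + m) * (k + m - 1) * γ - (k * (k - 1) * γ + m * (m - 1) * (1 - γ))
      - (k + m) * (k + m - 1) * (2 * γ - 1) = k * (m - 1 - c) := by ring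
  rcases le_or_gt 0 (k + c) with hc | hc
  · exact min_le_of_left_le (by nlinarith)
  · exact min_le_of_right_le (by nlinarith)

theorem stmt_2_general (n : ℕ) (γ : ℝ)
    (u : Bool → Bool → ℝ)
    (huaa : u true true = γ) (hubb : u false false = 1 - γ)
    (huab : u true false = 0) (huba : u false true = 0)
    (W : (Fin n → Bool) → ℝ)
    (hW : ∀ s, W s = ∑ i : Fin n, ∑ j ∈ univ.erase i, u (s i) (s j)) :
    ∀ s : Fin n → Bool, s ≠ (fun _ => true) →
      W s ≤ W (fun _ => true) -
        min (2 * γ * ((n : ℝ) - 1)) ((n : ℝ) * ((n : ℝ) - 1) * (2 * γ - 1)) := by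
  intro s hs
  have hu : ∀ x y, x ≠ y → u x y = 0 := by
    rintro (_ | _) (_ | _) h <;> simp [huab, huba] at h ⊢
  have welfare : ∀ s, W s = (#{i | s i = true} : ℝ) * (#{i | s i = true} - 1) * γ
      + (#{i | s i = false} : ℝ) * (#{i | s i = false} - 1) * (1 - γ) := fun s => by
    rw [hW, sum_sum_erase_eq_sum_card_fiber_of_offDiag_eq_zero s u hu, Fintype.sum_bool,
      huaa, hubb]
  have welfare_top : W (fun _ => true) = n * (n - 1) * γ := by
    rw [welfare]; simp
  have hcard : (n : ℝ) = #{i | s i = true} + #{i | s i = false} := by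
    have := card_filter_add_card_filter_not (s := univ) (p := fun i => s i = true)
    simp only [Bool.not_eq_true, card_univ, Fintype.card_fin] at this
    exact_mod_cast this.symm
  have hm : 1 ≤ #{i | s i = false} := by
    obtain ⟨i, hi⟩ := Function.ne_iff.mp hs
    exact card_pos.mpr ⟨i, by simpa using hi⟩
  rw [welfare, welfare_top, hcard]
  linarith [min_le_coordination_welfare_loss (#{i | s i = true} : ℝ) (#{i | s i = false}) γ
    (Nat.cast_nonneg _) (by exact_mod_cast hm)]

/-- On the complete graph on `n ≥ 2` players with the symmetric coordination
game and `1/2 < γ ≤ 1`, any profile other than all-`a` has welfare at least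
`min{2γ(n-1), n(n-1)(2γ-1)}` below the maximum (attained at all-`a`). -/
theorem stmt_2 (n : ℕ) (hn : 2 ≤ n) (γ : ℝ) (hγ1 : 1/2 < γ) (hγ2 : γ ≤ 1)
    (u : Bool → Bool → ℝ)
    (huaa : u true true = γ) (hubb : u false false = 1 - γ)
    (huab : u true false = 0) (huba : u false true = 0)
    (W : (Fin n → Bool) → ℝ)
    (hW : ∀ s, W s = ∑ i : Fin n, ∑ j ∈ univ.erase i, u (s i) (s j)) :
    ∀ s : Fin n → Bool, s ≠ (fun _ => true) →
      W s ≤ W (fun _ => true) -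
        min (2 * γ * ((n : ℝ) - 1)) ((n : ℝ) * ((n : ℝ) - 1) * (2 * γ - 1)) :=
  stmt_2_general n γ u huaa hubb huab huba W hW
end

section
/- Let 0 ≤ γ < 1/2 and let n ≥ 2 players on the complete graph each pairwise play the symmetric coordination game with payoffs γ on (a,a), 1−γ on (b,b), and 0 otherwise. Then the all-b profile maximises welfare, and any other profile has welfare at least min{2(1−γ)(n−1), n(n−1)(1−2γ)} less than the maximum. -/
/-!
With `k` players on `a` and `m` on `b`, only same-strategy ordered pairs score, so the welfare
is `γ k (k - 1) + (1 - γ) m (m - 1)`. Its shortfall from the all-`b` value `(1 - γ) n (n - 1)`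
is `(1 - 2γ) k (k - 1) + 2 (1 - γ) k m ≥ 0`. If `k ≥ 1`, either `m = 0` and the shortfall is
`n (n - 1) (1 - 2γ)`, or `m ≥ 1`, so `k m ≥ k + m - 1 = n - 1` and the shortfall is at least
`2 (1 - γ) (n - 1)`.
-/

open Finset

section Coordination

variable {ι σ : Type*} [Fintype ι] [DecidableEq ι] [DecidableEq σ]

def welfare (u : σ → σ → ℝ) (s : ι → σ) : ℝ :=
  ∑ i, ∑ j ∈ univ.erase i, u (s i) (s j)

theorem sum_erase_eq_of_coordination {u : σ → σ → ℝ} (hu : ∀ x y, x ≠ y → u x y = 0)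
    (s : ι → σ) (i : ι) :
    ∑ j ∈ univ.erase i, u (s i) (s j) = u (s i) (s i) * (#{j | s j = s i} - 1) := by
  have hi : i ∈ ({j | s j = s i} : Finset ι) := by simp
  rw [← sum_filter_of_ne fun j _ h => by_contra fun hj => h (hu _ _ (Ne.symm hj)),
    filter_erase, sum_congr rfl fun j hj => by rw [(mem_filter.1 (mem_of_mem_erase hj)).2],
    sum_const, card_erase_of_mem hi, nsmul_eq_mul, Nat.cast_pred (card_pos.2 ⟨i, hi⟩),
    mul_comm]

theorem welfare_eq_sum_of_coordination [Fintype σ] {u : σ → σ → ℝ}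
    (hu : ∀ x y, x ≠ y → u x y = 0) (s : ι → σ) :
    welfare u s = ∑ x, u x x * (#{i | s i = x} * (#{i | s i = x} - 1)) := by
  rw [welfare, ← sum_fiberwise univ s]
  refine sum_congr rfl fun x _ => ?_
  rw [sum_congr rfl fun i hi => by
    rw [sum_erase_eq_of_coordination hu, (mem_filter.1 hi).2], sum_const, nsmul_eq_mul]
  ring

end Coordination

theorem card_filter_true_add_card_filter_false {ι : Type*} [Fintype ι] (s : ι → Bool) :
    #{i | s i = true} + #{i | s i = false} = Fintype.card ι := by
  simpa using card_filter_add_card_filter_not (s := univ) (fun i => s i = true)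

theorem coordination_welfare_gap (γ : ℝ) (k m : ℝ) :
    (1 - γ) * ((k + m) * (k + m - 1)) - (γ * (k * (k - 1)) + (1 - γ) * (m * (m - 1))) =
      (1 - 2 * γ) * (k * (k - 1)) + 2 * (1 - γ) * (k * m) := by
  ring

theorem natCast_mul_natCast_sub_one_nonneg (k : ℕ) : (0 : ℝ) ≤ k * (k - 1) := by
  rcases k.eq_zero_or_pos with rfl | hk
  · simp
  · exact mul_nonneg k.cast_nonneg (sub_nonneg.2 (Nat.one_le_cast.2 hk))

theorem coordination_welfare_le {γ : ℝ} (hγ : γ ≤ 1 / 2) (k m : ℕ) :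
    γ * (k * (k - 1)) + (1 - γ) * (m * (m - 1)) ≤ (1 - γ) * ((k + m) * (k + m - 1)) := by
  have := coordination_welfare_gap γ k m
  have hkm : (0 : ℝ) ≤ k * m := by positivity
  nlinarith [natCast_mul_natCast_sub_one_nonneg k]

theorem coordination_welfare_le_sub_min {γ : ℝ} (hγ : γ ≤ 1 / 2) {k : ℕ} (hk : 1 ≤ k) (m : ℕ) :
    γ * (k * (k - 1)) + (1 - γ) * (m * (m - 1)) ≤ (1 - γ) * ((k + m) * (k + m - 1)) -
      min (2 * (1 - γ) * ((k + m : ℝ) - 1)) ((k + m : ℝ) * ((k + m : ℝ) - 1) * (1 - 2 * γ)) := by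
  have hgap := coordination_welfare_gap γ k m
  have hk' : (1 : ℝ) ≤ k := Nat.one_le_cast.2 hk
  rcases m.eq_zero_or_pos with rfl | hm
  · simp only [Nat.cast_zero, add_zero, mul_zero] at hgap ⊢
    linarith [min_le_right (2 * (1 - γ) * ((k : ℝ) - 1)) (k * (k - 1) * (1 - 2 * γ))]
  · have hm' : (1 : ℝ) ≤ m := Nat.one_le_cast.2 hm
    -- `(k - 1)(m - 1) ≥ 0`, i.e. `k m ≥ k + m - 1`
    have hkm : (k + m : ℝ) - 1 ≤ k * m := by nlinarith
    have := min_le_left (2 * (1 - γ) * ((k + m : ℝ) - 1))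
      ((k + m : ℝ) * ((k + m : ℝ) - 1) * (1 - 2 * γ))
    nlinarith [natCast_mul_natCast_sub_one_nonneg k]

theorem stmt_3_general (n : ℕ) (γ : ℝ) (hγ2 : γ < 1/2)
    (u : Bool → Bool → ℝ)
    (huaa : u true true = γ) (hubb : u false false = 1 - γ)
    (huab : u true false = 0) (huba : u false true = 0)
    (W : (Fin n → Bool) → ℝ)
    (hW : ∀ s, W s = ∑ i : Fin n, ∑ j ∈ univ.erase i, u (s i) (s j)) :
    (∀ s : Fin n → Bool, W s ≤ W (fun _ => false)) ∧
    (∀ s : Fin n → Bool, s ≠ (fun _ => false) →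
      W s ≤ W (fun _ => false) -
        min (2 * (1 - γ) * ((n : ℝ) - 1)) ((n : ℝ) * ((n : ℝ) - 1) * (1 - 2 * γ))) := by
  have hu : ∀ x y, x ≠ y → u x y = 0 := by
    rintro (_ | _) (_ | _) h <;> first | exact absurd rfl h | assumption
  have hWs : ∀ s, W s = γ * (#{i | s i = true} * (#{i | s i = true} - 1)) +
      (1 - γ) * (#{i | s i = false} * (#{i | s i = false} - 1)) := fun s => by
    rw [hW, ← welfare, welfare_eq_sum_of_coordination hu, Fintype.sum_bool, huaa, hubb]
  have hn : ∀ s : Fin n → Bool, (n : ℝ) = #{i | s i = true} + #{i | s i = false} := fun s => by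
    rw [← Nat.cast_add, card_filter_true_add_card_filter_false, Fintype.card_fin]
  have hWb : W (fun _ => false) = (1 - γ) * (n * (n - 1)) := by
    rw [hWs]
    simp
  refine ⟨fun s => ?_, fun s hs => ?_⟩
  · rw [hWs, hWb, hn s]
    exact coordination_welfare_le hγ2.le _ _
  · obtain ⟨i, hi⟩ := Function.ne_iff.1 hs
    have hk : 1 ≤ #{i | s i = true} := card_pos.2 ⟨i, by simpa using hi⟩
    rw [hWs, hWb, hn s]
    exact coordination_welfare_le_sub_min hγ2.le hk _

/-- On the complete graph on `n ≥ 2` players with the symmetric coordination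
game and `0 ≤ γ < 1/2`, the all-`b` profile maximises welfare, and any other
profile has welfare at least `min{2(1-γ)(n-1), n(n-1)(1-2γ)}` below the
maximum. -/
theorem stmt_3 (n : ℕ) (hn : 2 ≤ n) (γ : ℝ) (hγ1 : 0 ≤ γ) (hγ2 : γ < 1/2)
    (u : Bool → Bool → ℝ)
    (huaa : u true true = γ) (hubb : u false false = 1 - γ)
    (huab : u true false = 0) (huba : u false true = 0)
    (W : (Fin n → Bool) → ℝ)
    (hW : ∀ s, W s = ∑ i : Fin n, ∑ j ∈ univ.erase i, u (s i) (s j)) :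
    (∀ s : Fin n → Bool, W s ≤ W (fun _ => false)) ∧
    (∀ s : Fin n → Bool, s ≠ (fun _ => false) →
      W s ≤ W (fun _ => false) -
        min (2 * (1 - γ) * ((n : ℝ) - 1)) ((n : ℝ) * ((n : ℝ) - 1) * (1 - 2 * γ))) :=
  stmt_3_general n γ hγ2 u huaa hubb huab huba W hW
end

section
/- In the language game with γ_A = 1 and γ_B = 0 on a graph G, in any pure Nash equilibrium (X_a, X_b): every connected component of the subgraph induced by group A is entirely contained in X_a or entirely in X_b; every connected component of the subgraph induced by group B is entirely in X_a or entirely in X_b; and if a component C_A of G[A] and a component C_B of G[B] are joined by an edge, then it cannot be that C_B ⊆ X_a and C_A ⊆ X_b. -/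
open Finset

/-- In the language game with `γA = 1`, `γB = 0` on a graph `G` (`true` =
action a, `Agrp` the set of group-A players), in any pure Nash equilibrium:
every connected component of `G[A]` and of `G[B]` is monochromatic, and if a
group-A player and a group-B player are adjacent, it cannot be that the
A-player plays `b` while the B-player plays `a`. -/
theorem stmt_14 {V : Type} [Fintype V] [DecidableEq V]
    (G : SimpleGraph V) [DecidableRel G.Adj]
    (Agrp : Set V) [DecidablePred (· ∈ Agrp)]
    (γ : V → ℝ) (hγ : ∀ i, γ i = if i ∈ Agrp then 1 else 0)
    (U : V → (V → Bool) → ℝ)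
    (hU : ∀ i s, U i s = ∑ j ∈ G.neighborFinset i,
      (if s i = true ∧ s j = true then γ i
        else if s i = false ∧ s j = false then 1 - γ i else 0))
    (s : V → Bool)
    (hNE : ∀ (i : V) (x : Bool), U i (Function.update s i x) ≤ U i s) :
    (∀ (i j : V) (hi : i ∈ Agrp) (hj : j ∈ Agrp),
      (G.induce Agrp).Reachable ⟨i, hi⟩ ⟨j, hj⟩ → s i = s j) ∧
    (∀ (i j : V) (hi : i ∈ Agrpᶜ) (hj : j ∈ Agrpᶜ),
      (G.induce Agrpᶜ).Reachable ⟨i, hi⟩ ⟨j, hj⟩ → s i = s j) ∧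
    (∀ i j : V, i ∈ Agrp → j ∉ Agrp → G.Adj i j →
      ¬(s i = false ∧ s j = true)) := by
  -- Key lemma for A-players: if an A-player plays b, all its neighbours play b.
  have keyA : ∀ i ∈ Agrp, s i = false → ∀ j, G.Adj i j → s j = false := by
    intro i hi hsi j hadj
    have h := hNE i true
    rw [hU, hU] at h
    have h0 : (∑ j ∈ G.neighborFinset i,
        (if s i = true ∧ s j = true then γ i
          else if s i = false ∧ s j = false then 1 - γ i else 0)) = 0 := by
      apply Finset.sum_eq_zero
      intro k hk
      simp [hsi, hγ i, hi]
    have h1 : (∑ j ∈ G.neighborFinset i,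
        (if Function.update s i true i = true ∧ Function.update s i true j = true then γ i
          else if Function.update s i true i = false ∧ Function.update s i true j = false
            then 1 - γ i else 0))
        = ∑ j ∈ G.neighborFinset i, (if s j = true then (1:ℝ) else 0) := by
      apply Finset.sum_congr rfl
      intro k hk
      have hk' : k ≠ i := fun hki => G.loopless.irrefl i (hki ▸ (G.mem_neighborFinset i k).mp hk).symm
      simp [Function.update_self, Function.update_of_ne hk', hγ i, hi]
    rw [h0, h1] at h
    have hnn : ∀ k ∈ G.neighborFinset i, (0:ℝ) ≤ if s k = true then (1:ℝ) else 0 := by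
      intro k _; split <;> norm_num
    have hz := (Finset.sum_eq_zero_iff_of_nonneg hnn).mp
      (le_antisymm h (Finset.sum_nonneg hnn))
    have hj := hz j ((G.mem_neighborFinset i j).mpr hadj)
    cases hsj : s j with
    | false => rfl
    | true => simp [hsj] at hj
  -- Key lemma for B-players: if a B-player plays a, all its neighbours play a.
  have keyB : ∀ i ∉ Agrp, s i = true → ∀ j, G.Adj i j → s j = true := by
    intro i hi hsi j hadj
    have h := hNE i false
    rw [hU, hU] at h
    have h0 : (∑ j ∈ G.neighborFinset i,
        (if s i = true ∧ s j = true then γ i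
          else if s i = false ∧ s j = false then 1 - γ i else 0)) = 0 := by
      apply Finset.sum_eq_zero
      intro k hk
      simp [hsi, hγ i, hi]
    have h1 : (∑ j ∈ G.neighborFinset i,
        (if Function.update s i false i = true ∧ Function.update s i false j = true then γ i
          else if Function.update s i false i = false ∧ Function.update s i false j = false
            then 1 - γ i else 0))
        = ∑ j ∈ G.neighborFinset i, (if s j = false then (1:ℝ) else 0) := by
      apply Finset.sum_congr rfl
      intro k hk
      have hk' : k ≠ i := fun hki => G.loopless.irrefl i (hki ▸ (G.mem_neighborFinset i k).mp hk).symm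
      simp [Function.update_self, Function.update_of_ne hk', hγ i, hi]
    rw [h0, h1] at h
    have hnn : ∀ k ∈ G.neighborFinset i, (0:ℝ) ≤ if s k = false then (1:ℝ) else 0 := by
      intro k _; split <;> norm_num
    have hz := (Finset.sum_eq_zero_iff_of_nonneg hnn).mp
      (le_antisymm h (Finset.sum_nonneg hnn))
    have hj := hz j ((G.mem_neighborFinset i j).mpr hadj)
    cases hsj : s j with
    | true => rfl
    | false => simp [hsj] at hj
  have edgeA : ∀ i j, i ∈ Agrp → j ∈ Agrp → G.Adj i j → s i = s j := by
    intro i j hi hj hadj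
    cases hsi : s i with
    | false => exact (keyA i hi hsi j hadj).symm
    | true =>
      cases hsj : s j with
      | true => rfl
      | false => exact absurd (keyA j hj hsj i hadj.symm) (by simp [hsi])
  have edgeB : ∀ i j, i ∉ Agrp → j ∉ Agrp → G.Adj i j → s i = s j := by
    intro i j hi hj hadj
    cases hsi : s i with
    | true => exact (keyB i hi hsi j hadj).symm
    | false =>
      cases hsj : s j with
      | false => rfl
      | true => exact absurd (keyB j hj hsj i hadj.symm) (by simp [hsi])
  refine ⟨?_, ?_, ?_⟩
  · intro i j hi hj hr
    obtain ⟨w⟩ := hr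
    have : ∀ (u v : Agrp) (w : (G.induce Agrp).Walk u v), s u.1 = s v.1 := by
      intro u v w
      induction w with
      | nil => rfl
      | cons h p ih =>
        rename_i a b c
        exact (edgeA a.1 b.1 a.2 b.2 h).trans ih
    exact this ⟨i, hi⟩ ⟨j, hj⟩ w
  · intro i j hi hj hr
    obtain ⟨w⟩ := hr
    have : ∀ (u v : ↥(Agrpᶜ)) (w : (G.induce Agrpᶜ).Walk u v), s u.1 = s v.1 := by
      intro u v w
      induction w with
      | nil => rfl
      |cons h p ih =>
        rename_i a b c
        exact (edgeB a.1 b.1 a.2 b.2 h).trans ih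
    exact this ⟨i, hi⟩ ⟨j, hj⟩ w
  · rintro i j hi hj hadj ⟨hsi, hsj⟩
    have := keyA i hi hsi j hadj
    rw [hsj] at this
    exact Bool.noConfusion this
end

section
/- For any oriented graph D with matrices on arcs satisfying diagonal dominance (m_{aa} + m_{bb} ≥ m_{ab} + m_{ba} for every arc matrix), and the auxiliary weighted graph H constructed by the min-cut reduction (with added vertices x and y), every (x,y)-cut (X ∪ {x}, Y ∪ {y}) of H has w-weight equal to −ξ^P(D), where P = (X, Y) is the corresponding partition of V(D). -/
open Finset

/-- The part of the cut weight contributed by one arc with matrix `M`, when its tail lies on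
side `a` and its head on side `b` (`true` being the side of `x`). -/
noncomputable def arcCutWeight (M : Bool → Bool → ℝ) (a b : Bool) : ℝ :=
  (if a ≠ b then (M true true + M false false - M true false - M false true) / 2 else 0)
    + (if a = false then -(M false false) / 2 else 0)
    + (if b = false then -(M false false) / 2 else 0)
    + (if a = true then (M false true - M true true - M true false) / 2 else 0)
    + (if b = true then (M true false - M true true - M false true) / 2 else 0)

theorem arcCutWeight_eq_neg (M : Bool → Bool → ℝ) (a b : Bool) :
    arcCutWeight M a b = -M a b := by
  cases a <;> cases b <;> simp only [arcCutWeight] <;> norm_num <;> ring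

theorem stmt_18_general {V : Type}
    (A : Finset (V × V))
    (m : V → V → Bool → Bool → ℝ)
    (P : V → Bool)
    (cutWeight : ℝ)
    (hcut : cutWeight = ∑ p ∈ A,
      ((if P p.1 ≠ P p.2 then
          (m p.1 p.2 true true + m p.1 p.2 false false
            - m p.1 p.2 true false - m p.1 p.2 false true) / 2 else 0)
        + (if P p.1 = false then -(m p.1 p.2 false false) / 2 else 0)
        + (if P p.2 = false then -(m p.1 p.2 false false) / 2 else 0)
        + (if P p.1 = true then
            (m p.1 p.2 false true - m p.1 p.2 true true - m p.1 p.2 true false) / 2 else 0)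
        + (if P p.2 = true then
            (m p.1 p.2 true false - m p.1 p.2 true true - m p.1 p.2 false true) / 2 else 0))) :
    cutWeight = -(∑ p ∈ A, m p.1 p.2 (P p.1) (P p.2)) := by
  rw [hcut, ← sum_neg_distrib]
  exact sum_congr rfl fun p _ => arcCutWeight_eq_neg (m p.1 p.2) (P p.1) (P p.2)

/-- Min-cut reduction for diagonally dominant arc matrices: for an oriented
graph with arc set `A` and arc matrices `m i j` (entries indexed by `Bool`,
`true` = part containing `x`, i.e. `X_a`), the `w`-weight of the `(x,y)`-cut
determined by a partition `P` of the vertices equals `-ξ^P(D)`.  The cut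
weight is the sum over arcs of: the edge weight
`(m_aa + m_bb - m_ab - m_ba)/2` if the arc is cut, the contributions
`-m_bb/2` on `x`-edges to endpoints on the `y`-side, and the contributions
`(m_ba - m_aa - m_ab)/2`, `(m_ab - m_aa - m_ba)/2` on `y`-edges to endpoints
on the `x`-side. -/
theorem stmt_18 {V : Type} [DecidableEq V]
    (A : Finset (V × V))
    (horiented : ∀ p ∈ A, p.1 ≠ p.2 ∧ (p.2, p.1) ∉ A)
    (m : V → V → Bool → Bool → ℝ)
    (hdiag : ∀ p ∈ A, m p.1 p.2 true true + m p.1 p.2 false false ≥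
      m p.1 p.2 true false + m p.1 p.2 false true)
    (P : V → Bool)
    (cutWeight : ℝ)
    (hcut : cutWeight = ∑ p ∈ A,
      ((if P p.1 ≠ P p.2 then
          (m p.1 p.2 true true + m p.1 p.2 false false
            - m p.1 p.2 true false - m p.1 p.2 false true) / 2 else 0)
        + (if P p.1 = false then -(m p.1 p.2 false false) / 2 else 0)
        + (if P p.2 = false then -(m p.1 p.2 false false) / 2 else 0)
        + (if P p.1 = true then
            (m p.1 p.2 false true - m p.1 p.2 true true - m p.1 p.2 true false) / 2 else 0)
        + (if P p.2 = true then
            (m p.1 p.2 true false - m p.1 p.2 true true - m p.1 p.2 false true) / 2 else 0))) :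
    cutWeight = -(∑ p ∈ A, m p.1 p.2 (P p.1) (P p.2)) :=
  stmt_18_general A m P cutWeight hcut
end
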